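/- arXiv:1408.1542 — 5 statements merged into one kernel-verified Lean document; each statement's English description precedes it below -/
import Mathlib

section
/- The unique zero λ* of the function f(λ) = max_π Σₚ v_p a_{π(p)}(q_{π(p)} − λ) equals the optimal expected download rate max_σ (Σᵢ v_{σᵢ} aᵢ qᵢ)/(Σᵢ v_{σᵢ} aᵢ). -/
open Finset

/-- The unique zero of `f(λ) = max_π ∑ p, v p * a (π p) * (q (π p) - λ)` equals the
optimal expected download rate `max_σ (∑ i, v (σ i) * a i * q i)/(∑ i, v (σ i) * a i)`. -/
theorem zero_of_f_is_optimal_rate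
    (n : ℕ) (hn : 0 < n)
    (a q v : Fin n → ℝ)
    (ha : ∀ i, 0 < a i)
    (hv : ∀ p, 0 < v p)
    (hvmono : ∀ p p' : Fin n, p ≤ p' → v p' ≤ v p) :
    let f : ℝ → ℝ := fun l =>
      Finset.univ.sup' Finset.univ_nonempty
        (fun π : Equiv.Perm (Fin n) => ∑ p, v p * a (π p) * (q (π p) - l));
    let lstar : ℝ :=
      Finset.univ.sup' Finset.univ_nonempty
        (fun σ : Equiv.Perm (Fin n) =>
          (∑ i, v (σ i) * a i * q i) / (∑ i, v (σ i) * a i));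
    f lstar = 0 ∧ ∀ l : ℝ, f l = 0 → l = lstar := by
  intro f lstar
  set N : Equiv.Perm (Fin n) → ℝ := fun π => ∑ p, v p * a (π p) * q (π p) with hNdef
  set D : Equiv.Perm (Fin n) → ℝ := fun π => ∑ p, v p * a (π p) with hDdef
  have huniv : (Finset.univ : Finset (Fin n)).Nonempty := ⟨⟨0, hn⟩, mem_univ _⟩
  have hDpos : ∀ π, 0 < D π := fun π =>
    Finset.sum_pos (fun p _ => mul_pos (hv p) (ha _)) huniv
  have hterm : ∀ (π : Equiv.Perm (Fin n)) (l : ℝ),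
      (∑ p, v p * a (π p) * (q (π p) - l)) = N π - D π * l := by
    intro π l
    simp only [hNdef, hDdef, mul_sub, Finset.sum_sub_distrib, Finset.sum_mul]
  have hratN : ∀ σ : Equiv.Perm (Fin n), (∑ i, v (σ i) * a i * q i) = N σ⁻¹ := by
    intro σ
    exact Fintype.sum_equiv σ _ _ (fun i => by simp)
  have hratD : ∀ σ : Equiv.Perm (Fin n), (∑ i, v (σ i) * a i) = D σ⁻¹ := by
    intro σ
    exact Fintype.sum_equiv σ _ _ (fun i => by simp)
  have hle : ∀ π : Equiv.Perm (Fin n), N π / D π ≤ lstar := by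
    intro π
    have h := Finset.le_sup' (b := π⁻¹)
      (fun σ : Equiv.Perm (Fin n) =>
        (∑ i, v (σ i) * a i * q i) / (∑ i, v (σ i) * a i)) (mem_univ _)
    rwa [hratN, hratD, inv_inv] at h
  have hex : ∃ π : Equiv.Perm (Fin n), N π / D π = lstar := by
    obtain ⟨σ, -, hσ⟩ := Finset.exists_mem_eq_sup' Finset.univ_nonempty
      (fun σ : Equiv.Perm (Fin n) =>
        (∑ i, v (σ i) * a i * q i) / (∑ i, v (σ i) * a i))
    exact ⟨σ⁻¹, by rw [← hratN, ← hratD, ← hσ]⟩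
  obtain ⟨πs, hπs⟩ := hex
  have hflstar : f lstar = 0 := by
    apply le_antisymm
    · apply Finset.sup'_le
      intro π _
      rw [hterm, sub_nonpos]
      rw [mul_comm]
      exact (div_le_iff₀ (hDpos π)).mp (hle π)
    · have h := Finset.le_sup' (b := πs)
        (fun π : Equiv.Perm (Fin n) => ∑ p, v p * a (π p) * (q (π p) - lstar))
        (mem_univ _)
      have heq : N πs - D πs * lstar = 0 := by
        have : D πs * (N πs / D πs) = N πs := by
          rw [mul_comm]; exact div_mul_cancel₀ _ (hDpos πs).ne'
        rw [← hπs]; linarith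
      rw [hterm, heq] at h
      exact h
  refine ⟨hflstar, fun l hl => ?_⟩
  apply le_antisymm
  · -- l ≤ lstar : the sup is attained at some π0 with term 0
    obtain ⟨π0, -, h0⟩ := Finset.exists_mem_eq_sup' Finset.univ_nonempty
      (fun π : Equiv.Perm (Fin n) => ∑ p, v p * a (π p) * (q (π p) - l))
    have h0' : N π0 - D π0 * l = 0 := by rw [← hterm, ← h0]; exact hl
    have : N π0 / D π0 = l := by
      rw [div_eq_iff (hDpos π0).ne']
      linarith [h0']
    calc l = N π0 / D π0 := this.symm
      _ ≤ lstar := hle π0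
  · -- lstar ≤ l : term at πs is ≤ 0
    have h := Finset.le_sup' (b := πs)
      (fun π : Equiv.Perm (Fin n) => ∑ p, v p * a (π p) * (q (π p) - l))
      (mem_univ _)
    have h2 : N πs - D πs * l ≤ 0 := by
      rw [← hterm]; exact h.trans_eq hl
    have hN : lstar * D πs = N πs := by
      rw [← hπs, div_mul_cancel₀ _ (hDpos πs).ne']
    nlinarith [hDpos πs, h2, hN]
end

section
/- Suppose v₁ ≥ … ≥ vₙ > 0, aᵢ > 0, qᵢ ∈ (0,1], and a₁(q₁−λ*) ≥ … ≥ aₙ(qₙ−λ*) where λ* = (Σᵢ vᵢ aᵢ qᵢ)/(Σᵢ vᵢ aᵢ). Then Σⱼ [vⱼ² aⱼ qⱼ / (Σᵢ vᵢ aᵢ + vⱼ)] (qⱼ − λ*) ≥ 0. -/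
open Finset

/-- Key inequality: under the optimal ranking,
`∑ j, (v j ^ 2 * a j * q j / (∑ i, v i * a i + v j)) * (q j - λ*) ≥ 0`. -/
theorem key_inequality_nonneg
    (n : ℕ) (a q v : Fin n → ℝ)
    (ha : ∀ i, 0 < a i)
    (hq : ∀ i, 0 < q i ∧ q i ≤ 1)
    (hv : ∀ i, 0 < v i)
    (hvmono : ∀ i j : Fin n, i ≤ j → v j ≤ v i)
    (lstar : ℝ)
    (hl : lstar = (∑ i, v i * a i * q i) / (∑ i, v i * a i))
    (hopt : ∀ i j : Fin n, i ≤ j →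
      a j * (q j - lstar) ≤ a i * (q i - lstar)) :
    0 ≤ ∑ j, (v j ^ 2 * a j * q j / ((∑ i, v i * a i) + v j)) * (q j - lstar) := by
  set S : ℝ := ∑ i, v i * a i with hS
  have hS0 : 0 ≤ S := Finset.sum_nonneg fun i _ => le_of_lt (mul_pos (hv i) (ha i))
  have hSv : ∀ j : Fin n, 0 < S + v j := fun j => by have := hv j; linarith
  have hterm : ∀ j : Fin n,
      (v j ^ 2 * a j * q j / (S + v j)) * (q j - lstar)
      = (v j * q j / (S + v j)) * (v j * a j * (q j - lstar)) := by
    intro j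
    have h := (hSv j).ne'
    field_simp
  rw [Finset.sum_congr rfl fun j _ => hterm j]
  by_cases hall : ∀ j : Fin n, lstar ≤ q j
  · apply Finset.sum_nonneg
    intro j _
    have h1 : 0 ≤ v j * q j / (S + v j) :=
      div_nonneg (mul_nonneg (hv j).le (hq j).1.le) (hSv j).le
    have h2 : 0 ≤ v j * a j * (q j - lstar) :=
      mul_nonneg (mul_nonneg (hv j).le (ha j).le) (by have := hall j; linarith)
    exact mul_nonneg h1 h2
  · push_neg at hall
    obtain ⟨j0, hj0⟩ := hall
    have hne : (Finset.univ.filter fun i : Fin n => q i < lstar).Nonempty :=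
      ⟨j0, by simp [hj0]⟩
    set m : Fin n := (Finset.univ.filter fun i : Fin n => q i < lstar).min' hne with hmdef
    have hm : q m < lstar := by
      have := (Finset.univ.filter fun i : Fin n => q i < lstar).min'_mem hne
      simpa using this
    have hmin : ∀ j : Fin n, q j < lstar → m ≤ j := by
      intro j hj
      exact Finset.min'_le _ j (by simp [hj])
    have hSpos : 0 < S := Finset.sum_pos (fun i _ => mul_pos (hv i) (ha i)) ⟨m, Finset.mem_univ m⟩
    have hlpos : 0 ≤ lstar := by
      rw [hl]
      exact div_nonneg (Finset.sum_nonneg fun i _ =>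
        le_of_lt (mul_pos (mul_pos (hv i) (ha i)) (hq i).1)) hS0
    have hsum0 : ∑ j, v j * a j * (q j - lstar) = 0 := by
      have h1 : ∑ j, v j * a j * (q j - lstar)
          = (∑ j, v j * a j * q j) - lstar * S := by
        rw [hS, Finset.mul_sum, ← Finset.sum_sub_distrib]
        exact Finset.sum_congr rfl fun j _ => by ring
      rw [h1, hl, div_mul_cancel₀ _ hSpos.ne']
      ring
    have key : ∀ j : Fin n,
        lstar * (v m / (S + v m)) * (v j * a j * (q j - lstar))
        ≤ (v j * q j / (S + v j)) * (v j * a j * (q j - lstar)) := by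
      intro j
      by_cases hqj : lstar ≤ q j
      · -- j comes before m, coefficient is at least t, x j ≥ 0
        have hjm : j ≤ m := by
          by_contra hc
          have hle : m ≤ j := le_of_not_ge fun h => hc h
          have h1 := hopt m j hle
          have h2 : a m * (q m - lstar) < 0 :=
            mul_neg_of_pos_of_neg (ha m) (by linarith)
          have h3 : 0 ≤ a j * (q j - lstar) :=
            mul_nonneg (ha j).le (by linarith)
          linarith
        have hvjm : v m ≤ v j := hvmono j m hjm
        have hdiv : v m / (S + v m) ≤ v j / (S + v j) := by
          rw [div_le_div_iff₀ (hSv m) (hSv j)]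
          nlinarith [hv m, hv j]
        have hc1 : lstar * (v m / (S + v m)) ≤ lstar * (v j / (S + v j)) :=
          mul_le_mul_of_nonneg_left hdiv hlpos
        have hc2 : lstar * (v j / (S + v j)) ≤ v j * q j / (S + v j) := by
          rw [← mul_div_assoc, div_le_div_iff_of_pos_right (hSv j)]
          nlinarith [hv j]
        have hx : 0 ≤ v j * a j * (q j - lstar) :=
          mul_nonneg (mul_nonneg (hv j).le (ha j).le) (by linarith)
        exact mul_le_mul_of_nonneg_right (hc1.trans hc2) hx
      · push_neg at hqj
        have hjm : m ≤ j := hmin j hqj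
        have hvjm : v j ≤ v m := hvmono m j hjm
        have hdiv : v j / (S + v j) ≤ v m / (S + v m) := by
          rw [div_le_div_iff₀ (hSv j) (hSv m)]
          nlinarith [hv m, hv j]
        have hc1 : v j * q j / (S + v j) ≤ lstar * (v j / (S + v j)) := by
          rw [← mul_div_assoc, div_le_div_iff_of_pos_right (hSv j)]
          nlinarith [hv j]
        have hc2 : lstar * (v j / (S + v j)) ≤ lstar * (v m / (S + v m)) :=
          mul_le_mul_of_nonneg_left hdiv hlpos
        have hx : v j * a j * (q j - lstar) ≤ 0 :=
          mul_nonpos_of_nonneg_of_nonpos (mul_nonneg (hv j).le (ha j).le) (by linarith)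
        exact mul_le_mul_of_nonpos_right (hc1.trans hc2) hx
    calc (0:ℝ) = ∑ j, lstar * (v m / (S + v m)) * (v j * a j * (q j - lstar)) := by
          rw [← Finset.mul_sum, hsum0, mul_zero]
      _ ≤ _ := Finset.sum_le_sum fun j _ => key j
end

section
/- Under the performance (optimal) ranking, the expected number of downloads is nondecreasing over time: E[D_{t+1}] ≥ E[D_t], where E[D_{t+1}] = Σⱼ (vⱼaⱼqⱼ/Σᵢvᵢaᵢ)·((Σᵢvᵢaᵢqᵢ + vⱼqⱼ)/(Σᵢvᵢaᵢ + vⱼ)) + (1 − λ*)·λ* and E[D_t] = λ* = (Σᵢvᵢaᵢqᵢ)/(Σᵢvᵢaᵢ). -/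
open Finset

/-- Weighted Chebyshev sum inequality for similarly ordered (nonincreasing) families. -/
lemma cheb_weighted {n : ℕ} (w r b : Fin n → ℝ) (hw : ∀ i, 0 ≤ w i)
    (hr : ∀ i j : Fin n, i ≤ j → r j ≤ r i)
    (hb : ∀ i j : Fin n, i ≤ j → b j ≤ b i) :
    (∑ i, w i * r i) * (∑ i, w i * b i) ≤ (∑ i, w i) * (∑ i, w i * r i * b i) := by
  have key : 0 ≤ ∑ i, ∑ j, w i * w j * (r i - r j) * (b i - b j) := by
    apply Finset.sum_nonneg; intro i _
    apply Finset.sum_nonneg; intro j _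
    rcases le_total i j with h | h
    · have h1 : r j ≤ r i := hr i j h
      have h2 : b j ≤ b i := hb i j h
      have := mul_nonneg (mul_nonneg (hw i) (hw j)) (mul_nonneg (sub_nonneg.mpr h1) (sub_nonneg.mpr h2))
      linarith [this]
    · have h1 : r i ≤ r j := hr j i h
      have h2 : b i ≤ b j := hb j i h
      have := mul_nonneg (mul_nonneg (hw i) (hw j)) (mul_nonneg (sub_nonneg.mpr h1) (sub_nonneg.mpr h2))
      nlinarith [this]
  have expand : ∑ i, ∑ j, w i * w j * (r i - r j) * (b i - b j)
      = 2 * ((∑ i, w i) * (∑ i, w i * r i * b i))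
        - 2 * ((∑ i, w i * r i) * (∑ i, w i * b i)) := by
    have h1 : ∀ i : Fin n, ∑ j, w i * w j * (r i - r j) * (b i - b j)
        = (w i * r i * b i) * (∑ j, w j) - (w i * r i) * (∑ j, w j * b j)
          - (w i * b i) * (∑ j, w j * r j) + w i * (∑ j, w j * r j * b j) := by
      intro i
      rw [Finset.mul_sum, Finset.mul_sum, Finset.mul_sum, Finset.mul_sum]
      rw [← Finset.sum_sub_distrib, ← Finset.sum_sub_distrib, ← Finset.sum_add_distrib]
      apply Finset.sum_congr rfl; intro j _; ring
    rw [Finset.sum_congr rfl (fun i _ => h1 i)]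
    rw [Finset.sum_add_distrib, Finset.sum_sub_distrib, Finset.sum_sub_distrib,
      ← Finset.sum_mul, ← Finset.sum_mul, ← Finset.sum_mul, ← Finset.sum_mul]
    ring
  linarith [key, expand.symm ▸ key]

/-- Under the performance (optimal) ranking, the expected downloads are nondecreasing
over time: `E[D_{t+1}] ≥ E[D_t]`. -/
theorem expected_downloads_nondecreasing
    (n : ℕ) (a q v : Fin n → ℝ)
    (ha : ∀ i, 0 < a i)
    (hq : ∀ i, 0 < q i ∧ q i ≤ 1)
    (hv : ∀ i, 0 < v i)
    (hvmono : ∀ i j : Fin n, i ≤ j → v j ≤ v i)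
    (lstar : ℝ)
    (hl : lstar = (∑ i, v i * a i * q i) / (∑ i, v i * a i))
    (hopt : ∀ i j : Fin n, i ≤ j →
      a j * (q j - lstar) ≤ a i * (q i - lstar)) :
    lstar ≤
      (∑ j, (v j * a j * q j / (∑ i, v i * a i)) *
          (((∑ i, v i * a i * q i) + v j * q j) / ((∑ i, v i * a i) + v j)))
        + (1 - lstar) * lstar := by
  rcases Nat.eq_zero_or_pos n with hn | hn
  · subst hn
    simp [hl]
  -- Notation
  set S := ∑ i, v i * a i with hSdef
  set T := ∑ i, v i * a i * q i with hTdef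
  have hne : (Finset.univ : Finset (Fin n)).Nonempty := by
    simpa using Finset.univ_nonempty_iff.mpr (Fin.pos_iff_nonempty.mp hn)
  have hS : 0 < S := Finset.sum_pos (fun i _ => mul_pos (hv i) (ha i)) hne
  have hT : 0 ≤ T := Finset.sum_nonneg fun i _ =>
    le_of_lt (mul_pos (mul_pos (hv i) (ha i)) (hq i).1)
  have hSne : S ≠ 0 := ne_of_gt hS
  have hSl : S * lstar = T := by rw [hl]; field_simp
  -- the auxiliary functions for Chebyshev
  set r : Fin n → ℝ := fun i => v i / (S + v i) with hrdef
  set b : Fin n → ℝ := fun i => a i * (S * q i - T) with hbdef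
  have hSv : ∀ i : Fin n, 0 < S + v i := fun i => add_pos hS (hv i)
  have hrmono : ∀ i j : Fin n, i ≤ j → r j ≤ r i := by
    intro i j hij
    have hvle := hvmono i j hij
    rw [hrdef]
    rw [div_le_div_iff₀ (hSv j) (hSv i)]
    nlinarith [mul_le_mul_of_nonneg_right hvle hS.le]
  have hbmono : ∀ i j : Fin n, i ≤ j → b j ≤ b i := by
    intro i j hij
    have h := hopt i j hij
    have h2 := mul_le_mul_of_nonneg_left h hS.le
    rw [hbdef]
    simp only
    calc a j * (S * q j - T) = S * (a j * (q j - lstar)) := by rw [← hSl]; ring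
      _ ≤ S * (a i * (q i - lstar)) := h2
      _ = a i * (S * q i - T) := by rw [← hSl]; ring
  have hvb : ∑ i, v i * b i = 0 := by
    have : ∀ i : Fin n, v i * b i = S * (v i * a i * q i) - T * (v i * a i) := by
      intro i; rw [hbdef]; ring
    rw [Finset.sum_congr rfl (fun i _ => this i), Finset.sum_sub_distrib,
      ← Finset.mul_sum, ← Finset.mul_sum, ← hSdef, ← hTdef]
    ring
  -- Chebyshev gives the key positivity
  have hcheb := cheb_weighted v r b (fun i => (hv i).le) hrmono hbmono
  rw [hvb, mul_zero] at hcheb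
  have hP : 0 ≤ ∑ i, v i * r i * b i := by
    have hSsum : 0 < ∑ i, v i := Finset.sum_pos (fun i _ => hv i) hne
    nlinarith [hcheb, hSsum]
  -- the main nonnegative remainder
  set R := ∑ j, v j * r j * (a j * q j * (S * q j - T)) with hRdef
  have hSR : S * R = (∑ j, v j * r j * (a j * (S * q j - T) ^ 2)) + T * (∑ i, v i * r i * b i) := by
    rw [hRdef, Finset.mul_sum, Finset.mul_sum, ← Finset.sum_add_distrib]
    apply Finset.sum_congr rfl; intro j _
    rw [hbdef]; ring
  have hRnonneg : 0 ≤ R := by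
    have h1 : 0 ≤ ∑ j, v j * r j * (a j * (S * q j - T) ^ 2) :=
      Finset.sum_nonneg fun j _ => by
        have := hv j; have := ha j; have hr0 : 0 ≤ r j := by
          rw [hrdef]; positivity
        positivity
    have h2 : 0 ≤ S * R := by rw [hSR]; nlinarith [mul_nonneg hT hP]
    nlinarith [h2, hS]
  -- rewrite each summand of the goal sum
  have hsummand : ∀ j : Fin n,
      (v j * a j * q j / S) * ((T + v j * q j) / (S + v j))
        = (v j * a j * q j) * T / (S * S)
          + (v j * r j * (a j * q j * (S * q j - T))) / (S * S) := by
    intro j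
    rw [hrdef]
    have h1 : (S + v j) ≠ 0 := ne_of_gt (hSv j)
    field_simp
    ring
  have hsum : (∑ j, (v j * a j * q j / S) * ((T + v j * q j) / (S + v j)))
      = T * T / (S * S) + R / (S * S) := by
    rw [Finset.sum_congr rfl (fun j _ => hsummand j), Finset.sum_add_distrib]
    congr 1
    · rw [← Finset.sum_div, ← Finset.sum_mul, ← hTdef]
    · rw [← Finset.sum_div, hRdef]
  rw [hsum, hl]
  have hfrac : 0 ≤ R / (S * S) := div_nonneg hRnonneg (by positivity)
  have hTT : T * T / (S * S) = (T / S) * (T / S) := by field_simp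
  rw [hTT]
  nlinarith [hfrac]
end

section
/- The one-step conditional expected download rate under a fixed ranking satisfies E[D_{t+1}] − E[D_t] = (1/Σᵢvᵢaᵢ) · Σⱼ [vⱼ²aⱼqⱼ/(Σᵢvᵢaᵢ + vⱼ)] (qⱼ − λ*), where λ* = E[D_t] = (Σᵢvᵢaᵢqᵢ)/(Σᵢvᵢaᵢ). -/
open Finset

/-- Algebraic identity for the one-step change in expected download rate:
`E[D_{t+1}] − E[D_t] = (1/∑ᵢvᵢaᵢ) · ∑ⱼ [vⱼ²aⱼqⱼ/(∑ᵢvᵢaᵢ + vⱼ)] (qⱼ − λ*)`. -/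
theorem one_step_difference_identity
    (n : ℕ) (a q v : Fin n → ℝ)
    (ha : ∀ i, 0 < a i)
    (hq : ∀ i, 0 ≤ q i ∧ q i ≤ 1)
    (hv : ∀ i, 0 < v i)
    (lstar : ℝ)
    (hl : lstar = (∑ i, v i * a i * q i) / (∑ i, v i * a i)) :
    ((∑ j, (v j * a j * q j / (∑ i, v i * a i)) *
          (((∑ i, v i * a i * q i) + v j * q j) / ((∑ i, v i * a i) + v j)))
        + (1 - lstar) * lstar) - lstar
      = (1 / (∑ i, v i * a i)) *
          ∑ j, (v j ^ 2 * a j * q j / ((∑ i, v i * a i) + v j)) * (q j - lstar) := by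
  rcases Nat.eq_zero_or_pos n with hn | hn
  · subst hn hl
    simp
  · have hS : 0 < ∑ i, v i * a i :=
      Finset.sum_pos (fun i _ => mul_pos (hv i) (ha i))
        ⟨⟨0, hn⟩, Finset.mem_univ _⟩
    set S := ∑ i, v i * a i with hSdef
    set T := ∑ i, v i * a i * q i with hTdef
    subst hl
    have hS' : S ≠ 0 := ne_of_gt hS
    have key : ∀ j : Fin n,
        (v j * a j * q j / S) * ((T + v j * q j) / (S + v j))
          - v j * a j * q j * T / S ^ 2
        = (1 / S) * ((v j ^ 2 * a j * q j / (S + v j)) * (q j - T / S)) := by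
      intro j
      have hSv : S + v j ≠ 0 := ne_of_gt (add_pos hS (hv j))
      field_simp
      ring
    have hsq : (1 - T / S) * (T / S) - T / S = -(T * T / S ^ 2) := by
      field_simp; ring
    have hT2 : T * T / S ^ 2 = ∑ j, v j * a j * q j * T / S ^ 2 := by
      rw [← Finset.sum_div, ← Finset.sum_mul]
    calc (∑ j, (v j * a j * q j / S) * ((T + v j * q j) / (S + v j)))
          + (1 - T / S) * (T / S) - T / S
        = ∑ j, ((v j * a j * q j / S) * ((T + v j * q j) / (S + v j))
            - v j * a j * q j * T / S ^ 2) := by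
          rw [Finset.sum_sub_distrib, ← hT2]
          rw [add_sub_assoc, hsq]; ring
      _ = ∑ j, (1 / S) * ((v j ^ 2 * a j * q j / (S + v j)) * (q j - T / S)) :=
          Finset.sum_congr rfl (fun j _ => key j)
      _ = (1 / S) * ∑ j, (v j ^ 2 * a j * q j / (S + v j)) * (q j - T / S) := by
          rw [Finset.mul_sum]
end

section
/- Let P₁ = {j : qⱼ ≥ λ*} and P₂ = {j : qⱼ < λ*}, and suppose vⱼ ≥ v_k and qⱼ ≥ q_k for all j ∈ P₁, k ∈ P₂. Let v̲ = min_{j∈P₁} vⱼ and q̲ = min_{j∈P₁} qⱼ. Then Σⱼ [vⱼ²aⱼqⱼ/(C + vⱼ)](qⱼ−λ*) ≥ (v̲ q̲/(C + v̲)) Σⱼ vⱼaⱼ(qⱼ−λ*) where C = Σᵢ vᵢaᵢ. -/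
open Finset

lemma ratio_mono (C x y : ℝ) (hC : 0 < C) (hx : 0 < x) (hxy : x ≤ y) :
    x / (C + x) ≤ y / (C + y) := by
  rw [div_le_div_iff₀ (by linarith) (by linarith)]
  nlinarith

/-- Termwise bounding: with `P₁ = {j : qⱼ ≥ λ*}` nonempty, `P₂ = {j : qⱼ < λ*}`, and
songs in `P₁` dominating songs in `P₂` in visibility and quality,
`∑ⱼ [vⱼ²aⱼqⱼ/(C+vⱼ)](qⱼ−λ*) ≥ (v̲q̲/(C+v̲)) ∑ⱼ vⱼaⱼ(qⱼ−λ*)` where `C = ∑ᵢ vᵢaᵢ`. -/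
theorem termwise_bound
    (n : ℕ) (a q v : Fin n → ℝ)
    (ha : ∀ i, 0 < a i)
    (hq : ∀ i, 0 < q i ∧ q i ≤ 1)
    (hv : ∀ i, 0 < v i)
    (lstar : ℝ)
    (hP1 : (Finset.univ.filter (fun j : Fin n => lstar ≤ q j)).Nonempty)
    (hdom : ∀ j k : Fin n, lstar ≤ q j → q k < lstar → v k ≤ v j ∧ q k ≤ q j) :
    ((Finset.univ.filter (fun j : Fin n => lstar ≤ q j)).inf' hP1 v *
        (Finset.univ.filter (fun j : Fin n => lstar ≤ q j)).inf' hP1 q /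
        ((∑ i, v i * a i) +
          (Finset.univ.filter (fun j : Fin n => lstar ≤ q j)).inf' hP1 v)) *
      (∑ j, v j * a j * (q j - lstar))
    ≤ ∑ j, (v j ^ 2 * a j * q j / ((∑ i, v i * a i) + v j)) * (q j - lstar) := by
  set C := ∑ i, v i * a i with hCdef
  set P1 := Finset.univ.filter (fun j : Fin n => lstar ≤ q j) with hP1def
  set vb := P1.inf' hP1 v with hvb
  set qb := P1.inf' hP1 q with hqb
  have hC : 0 < C := by
    obtain ⟨j, _⟩ := hP1
    exact Finset.sum_pos' (fun i _ => le_of_lt (mul_pos (hv i) (ha i)))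
      ⟨j, Finset.mem_univ j, mul_pos (hv j) (ha j)⟩
  have hvbpos : 0 < vb := by
    rw [hvb, Finset.lt_inf'_iff]; exact fun b _ => hv b
  have hqbpos : 0 < qb := by
    rw [hqb, Finset.lt_inf'_iff]; exact fun b _ => (hq b).1
  rw [Finset.mul_sum]
  apply Finset.sum_le_sum
  intro j _
  have hden : (0:ℝ) < C + v j := by have := hv j; linarith
  rcases le_or_gt lstar (q j) with hj | hj
  · -- j ∈ P₁
    have hjP : j ∈ P1 := by simp [hP1def, hj]
    have h1 : vb ≤ v j := Finset.inf'_le v hjP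
    have h2 : qb ≤ q j := Finset.inf'_le q hjP
    have hcoef : vb * qb / (C + vb) ≤ v j * q j / (C + v j) := by
      have hmono := ratio_mono C vb (v j) hC hvbpos h1
      calc vb * qb / (C + vb) = qb * (vb / (C + vb)) := by ring
        _ ≤ q j * (v j / (C + v j)) := by
            apply mul_le_mul h2 hmono (by positivity) (le_of_lt (hq j).1)
        _ = v j * q j / (C + v j) := by ring
    have hnn : 0 ≤ v j * a j * (q j - lstar) := by
      have := hv j; have := ha j
      apply mul_nonneg (by positivity) (by linarith)
    calc vb * qb / (C + vb) * (v j * a j * (q j - lstar))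
        ≤ v j * q j / (C + v j) * (v j * a j * (q j - lstar)) :=
          mul_le_mul_of_nonneg_right hcoef hnn
      _ = v j ^ 2 * a j * q j / (C + v j) * (q j - lstar) := by ring
  · -- j ∈ P₂
    have h1 : v j ≤ vb := Finset.le_inf' hP1 _ (fun b hb => by
      have hb' : lstar ≤ q b := by simpa [hP1def] using hb
      exact (hdom b j hb' hj).1)
    have h2 : q j ≤ qb := Finset.le_inf' hP1 _ (fun b hb => by
      have hb' : lstar ≤ q b := by simpa [hP1def] using hb
      exact (hdom b j hb' hj).2)
    have hcoef : v j * q j / (C + v j) ≤ vb * qb / (C + vb) := by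
      have hmono := ratio_mono C (v j) vb hC (hv j) h1
      calc v j * q j / (C + v j) = q j * (v j / (C + v j)) := by ring
        _ ≤ qb * (vb / (C + vb)) := by
            apply mul_le_mul h2 hmono (div_nonneg (hv j).le hden.le) (le_of_lt hqbpos)
        _ = vb * qb / (C + vb) := by ring
    have hnp : v j * a j * (q j - lstar) ≤ 0 := by
      have := hv j; have := ha j
      apply mul_nonpos_of_nonneg_of_nonpos (mul_nonneg (hv j).le (ha j).le) (by linarith)
    calc vb * qb / (C + vb) * (v j * a j * (q j - lstar))
        ≤ v j * q j / (C + v j) * (v j * a j * (q j - lstar)) :=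
          mul_le_mul_of_nonpos_right hcoef hnp
      _ = v j ^ 2 * a j * q j / (C + v j) * (q j - lstar) := by ring
end
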